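/- Let A, N_1, …, N_q ∈ ℝ^{n×n}, C ∈ ℝ^{p×n}, and let K = (k_{ij}) ∈ ℝ^{q×q} be symmetric positive semidefinite. Suppose there exists a symmetric positive definite X with AᵀX + XA + Σ_{i,j=1}^q N_iᵀ X N_j k_{ij} − CᵀC ≺ 0 (the algebraic characterization of stabilizability of (Aᵀ, Cᵀ, N_iᵀ)). Then the triple (A, C, N_i) is detectable in the Hautus sense: for every real λ ≥ 0 and every symmetric positive semidefinite V ≠ 0 with A V + V Aᵀ + Σ_{i,j=1}^q N_i V N_jᵀ k_{ij} = λV, one has CV ≠ 0. -/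

import Mathlib

/-!
Pair the strict Lyapunov inequality with `V` through the trace. The operator
`X ↦ AᵀX + XA + Σ k_ij N_iᵀ X N_j` is the trace-adjoint of the Hautus operator
`V ↦ AV + VAᵀ + Σ k_ij N_i V N_jᵀ` on symmetric matrices, so for an eigenvector `V` with
eigenvalue `λ ≥ 0` and `CV = 0` the pairing equals `λ tr(XV) ≥ 0`. But the trace of the product of
a negative definite and a nonzero positive semidefinite matrix is negative.
-/

open Matrix BigOperators

open scoped ComplexOrder MatrixOrder in
theorem Matrix.PosDef.trace_mul_pos {𝕜 n : Type*} [RCLike 𝕜] [Fintype n] [DecidableEq n]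
    {M V : Matrix n n 𝕜} (hM : M.PosDef) (hV : V.PosSemidef) (hV0 : V ≠ 0) :
    0 < (M * V).trace := by
  obtain ⟨B, hB, rfl⟩ := CStarAlgebra.isStrictlyPositive_iff_eq_star_mul_self.mp
    hM.isStrictlyPositive
  have hBVB : (B * V * Bᴴ).PosSemidef := hV.mul_mul_conjTranspose_same B
  have hBVB0 : B * V * Bᴴ ≠ 0 := by
    rwa [Ne, ← star_eq_conjTranspose, hB.star.mul_left_eq_zero, hB.mul_right_eq_zero]
  rw [star_eq_conjTranspose, Matrix.mul_assoc, trace_mul_comm]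
  exact hBVB.trace_nonneg.lt_of_ne (Ne.symm (mt hBVB.trace_eq_zero_iff.mp hBVB0))

section Lyapunov

variable {ι n R : Type*} [Fintype ι] [Fintype n] [CommRing R]

def lyapunovMap (A : Matrix n n R) (N : ι → Matrix n n R) (K : Matrix ι ι R)
    (V : Matrix n n R) : Matrix n n R :=
  A * V + V * Aᵀ + ∑ i, ∑ j, K i j • (N i * V * (N j)ᵀ)

def lyapunovMapAdjoint (A : Matrix n n R) (N : ι → Matrix n n R) (K : Matrix ι ι R)
    (X : Matrix n n R) : Matrix n n R :=
  Aᵀ * X + X * A + ∑ i, ∑ j, K i j • ((N i)ᵀ * X * N j)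

theorem trace_lyapunovMapAdjoint_mul (A : Matrix n n R) (N : ι → Matrix n n R)
    (K : Matrix ι ι R) {X V : Matrix n n R} (hX : X.IsSymm) (hV : V.IsSymm) :
    (lyapunovMapAdjoint A N K X * V).trace = (X * lyapunovMap A N K V).trace := by
  have hnoise : ∀ i j, ((N i)ᵀ * X * N j * V).trace = (X * (N i * V * (N j)ᵀ)).trace := by
    intro i j
    rw [← trace_transpose]
    simp only [transpose_mul, transpose_transpose, hX.eq, hV.eq, Matrix.mul_assoc]
    rw [← Matrix.mul_assoc, trace_mul_comm]
    simp only [Matrix.mul_assoc]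
  simp only [lyapunovMap, lyapunovMapAdjoint, Matrix.add_mul, Matrix.mul_add, Matrix.sum_mul,
    Matrix.mul_sum, Matrix.smul_mul, Matrix.mul_smul, trace_add, trace_sum, trace_smul, hnoise]
  rw [trace_mul_cycle Aᵀ, trace_mul_comm (V * Aᵀ), Matrix.mul_assoc X A V,
    add_comm (X * (A * V)).trace]

end Lyapunov

theorem stmt_15_general {n p q : ℕ}
    (A : Matrix (Fin n) (Fin n) ℝ) (N : Fin q → Matrix (Fin n) (Fin n) ℝ)
    (C : Matrix (Fin p) (Fin n) ℝ)
    (K : Matrix (Fin q) (Fin q) ℝ)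
    (hstab : ∃ X : Matrix (Fin n) (Fin n) ℝ, X.PosDef ∧
      (-(Aᵀ * X + X * A + (∑ i : Fin q, ∑ j : Fin q, K i j • ((N i)ᵀ * X * N j)) -
        Cᵀ * C)).PosDef) :
    ∀ l : ℝ, 0 ≤ l → ∀ V : Matrix (Fin n) (Fin n) ℝ, V.PosSemidef → V ≠ 0 →
      A * V + V * Aᵀ + ∑ i : Fin q, ∑ j : Fin q, K i j • (N i * V * (N j)ᵀ) = l • V →
      C * V ≠ 0 := by
  obtain ⟨X, hX, hM⟩ := hstab
  change (-(lyapunovMapAdjoint A N K X - Cᵀ * C)).PosDef at hM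
  intro l hl V hV hV0 hLV hCV
  change lyapunovMap A N K V = l • V at hLV
  have hXV : 0 < (X * V).trace := hX.trace_mul_pos hV hV0
  have hpairing : 0 < -(l * (X * V).trace) :=
    calc 0 < (-(lyapunovMapAdjoint A N K X - Cᵀ * C) * V).trace := hM.trace_mul_pos hV hV0
      _ = -((lyapunovMapAdjoint A N K X * V).trace - (Cᵀ * (C * V)).trace) := by
        rw [Matrix.neg_mul, trace_neg, Matrix.sub_mul, trace_sub, Matrix.mul_assoc]
      _ = -(l * (X * V).trace) := by
        rw [hCV, Matrix.mul_zero, trace_zero, sub_zero,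
          trace_lyapunovMapAdjoint_mul A N K (isHermitian_iff_isSymm.mp hX.isHermitian)
            (isHermitian_iff_isSymm.mp hV.isHermitian), hLV, Matrix.mul_smul, trace_smul,
          smul_eq_mul]
  linarith [mul_nonneg hl hXV.le]

/-- Stabilizability of the dual triple `(Aᵀ, Cᵀ, N_iᵀ)` (algebraic form) implies
detectability of `(A, C, N_i)` in the Hautus sense. -/
theorem stmt_15 {n p q : ℕ}
    (A : Matrix (Fin n) (Fin n) ℝ) (N : Fin q → Matrix (Fin n) (Fin n) ℝ)
    (C : Matrix (Fin p) (Fin n) ℝ)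
    (K : Matrix (Fin q) (Fin q) ℝ) (hK : K.PosSemidef)
    (hstab : ∃ X : Matrix (Fin n) (Fin n) ℝ, X.PosDef ∧
      (-(Aᵀ * X + X * A + (∑ i : Fin q, ∑ j : Fin q, K i j • ((N i)ᵀ * X * N j)) -
        Cᵀ * C)).PosDef) :
    ∀ l : ℝ, 0 ≤ l → ∀ V : Matrix (Fin n) (Fin n) ℝ, V.PosSemidef → V ≠ 0 →
      A * V + V * Aᵀ + ∑ i : Fin q, ∑ j : Fin q, K i j • (N i * V * (N j)ᵀ) = l • V →
      C * V ≠ 0 :=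
  stmt_15_general A N C K hstab
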